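/- Let Ω be a locally compact, second countable Hausdorff topological space with its Borel σ-algebra, and let E be a POM on Borel(Ω) with values in the bounded operators on a complex separable Hilbert space H. If for every open set U ⊆ Ω with E(U) ≠ I there exists a sequence (ψₙ) of unit vectors in H such that ⟨ψₙ, E(U)ψₙ⟩ → 0 as n → ∞, then E has the norm-1-property. -/

import Mathlib

open MeasureTheory ContinuousLinearMap Filter
open scoped InnerProductSpace

/-- if for every open `U` with `E U ≠ 1` the probability of `U` can
be made arbitrarily small along a sequence of unit vectors, then `E` has the
norm-1-property. -/
theorem pom_norm_one_of_vanishing_on_open_sets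
    {Ω : Type*} [TopologicalSpace Ω] [LocallyCompactSpace Ω]
    [SecondCountableTopology Ω] [T2Space Ω] [MeasurableSpace Ω] [BorelSpace Ω]
    {H : Type*} [NormedAddCommGroup H] [InnerProductSpace ℂ H] [CompleteSpace H]
    [TopologicalSpace.SeparableSpace H]
    (E : Set Ω → (H →L[ℂ] H))
    (hpos : ∀ X : Set Ω, MeasurableSet X → 0 ≤ E X)
    (hbdd : ∀ X : Set Ω, MeasurableSet X → E X ≤ 1)
    (huniv : E Set.univ = 1)
    (hadd : ∀ (φ : H) (X : ℕ → Set Ω), (∀ i, MeasurableSet (X i)) →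
      Pairwise (Function.onFun Disjoint X) →
      HasSum (fun i => ⟪φ, E (X i) φ⟫_ℂ) ⟪φ, E (⋃ i, X i) φ⟫_ℂ)
    (hopen : ∀ U : Set Ω, IsOpen U → E U ≠ 1 → ∃ ψ : ℕ → H,
      (∀ n, ‖ψ n‖ = 1) ∧ Tendsto (fun n => (⟪ψ n, E U (ψ n)⟫_ℂ).re) atTop (nhds 0)) :
    ∀ X : Set Ω, MeasurableSet X → E X ≠ 0 → ‖E X‖ = 1 := by
  intro X hX hXne
  -- the inner product vanishes on the empty set
  have hempty : ∀ φ : H, ⟪φ, E ∅ φ⟫_ℂ = 0 := by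
    intro φ
    have h := hadd φ (fun _ => (∅ : Set Ω)) (fun _ => MeasurableSet.empty)
      (fun i j _ => by simp [Function.onFun])
    simp only [Set.iUnion_empty] at h
    exact (summable_const_iff _).mp h.summable
  -- finite additivity for two disjoint sets
  have hpair : ∀ (φ : H) (A B : Set Ω), MeasurableSet A → MeasurableSet B →
      Disjoint A B → ⟪φ, E (A ∪ B) φ⟫_ℂ = ⟪φ, E A φ⟫_ℂ + ⟪φ, E B φ⟫_ℂ := by
    intro φ A B hA hB hAB
    set f : ℕ → Set Ω := fun n => if n = 0 then A else if n = 1 then B else ∅ with hf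
    have hfm : ∀ i, MeasurableSet (f i) := by
      intro i; simp only [hf]
      split_ifs
      · exact hA
      · exact hB
      · exact MeasurableSet.empty
    have hdisj : Pairwise (Function.onFun Disjoint f) := by
      intro i j hij
      simp only [Function.onFun, hf]
      by_cases hi0 : i = 0 <;> by_cases hi1 : i = 1 <;>
        by_cases hj0 : j = 0 <;> by_cases hj1 : j = 1 <;>
        simp_all <;>
        first
          | exact hAB
          | exact hAB.symm
    have hU : (⋃ i, f i) = A ∪ B := by
      apply Set.Subset.antisymm
      · exact Set.iUnion_subset fun i => by
          simp only [hf]; split_ifs <;> simp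
      · intro x hx
        rcases hx with hx | hx
        · exact Set.mem_iUnion.2 ⟨0, by simpa [hf] using hx⟩
        · exact Set.mem_iUnion.2 ⟨1, by simpa [hf] using hx⟩
    have h1 := hadd φ f hfm hdisj
    rw [hU] at h1
    have h2 : HasSum (fun i => ⟪φ, E (f i) φ⟫_ℂ)
        (∑ i ∈ Finset.range 2, ⟪φ, E (f i) φ⟫_ℂ) := by
      apply hasSum_sum_of_ne_finset_zero
      intro i hi
      have hi' : ¬ i = 0 ∧ ¬ i = 1 := by
        simp only [Finset.mem_range] at hi; omega
      simp [hf, hi'.1, hi'.2, hempty φ]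
    rw [h1.unique h2]
    simp [hf, Finset.sum_range_succ]
  -- nonnegativity of the quadratic form
  have hqnn : ∀ (φ : H) (S : Set Ω), MeasurableSet S → 0 ≤ (⟪φ, E S φ⟫_ℂ).re := by
    intro φ S hS
    have := ((nonneg_iff_isPositive (E S)).mp (hpos S hS)).inner_nonneg_right φ
    simpa using (Complex.le_def.mp this).1
  -- monotonicity of the quadratic form
  have hmono : ∀ (φ : H) (A B : Set Ω), MeasurableSet A → MeasurableSet B → A ⊆ B →
      (⟪φ, E A φ⟫_ℂ).re ≤ (⟪φ, E B φ⟫_ℂ).re := by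
    intro φ A B hA hB hAB
    have h := hpair φ A (B \ A) hA (hB.diff hA) Set.disjoint_sdiff_right
    rw [Set.union_diff_cancel hAB] at h
    have hnn := hqnn φ (B \ A) (hB.diff hA)
    rw [h, Complex.add_re]
    linarith
  -- complement formula
  have hcompl : ∀ φ : H, (⟪φ, E X φ⟫_ℂ).re + (⟪φ, E Xᶜ φ⟫_ℂ).re = ‖φ‖ ^ 2 := by
    intro φ
    have h := hpair φ X Xᶜ hX hX.compl disjoint_compl_right
    rw [Set.union_compl_self, huniv] at h
    have h3 := congrArg Complex.re h
    simp only [ContinuousLinearMap.one_apply, Complex.add_re] at h3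
    have h2 : (⟪φ, φ⟫_ℂ).re = ‖φ‖ ^ 2 := by
      simpa using inner_self_eq_norm_sq (𝕜 := ℂ) φ
    linarith
  -- a vector with positive probability of X
  have hφex : ∃ φ : H, 0 < (⟪φ, E X φ⟫_ℂ).re := by
    by_contra hcon
    push_neg at hcon
    apply hXne
    have hposX := (nonneg_iff_isPositive (E X)).mp (hpos X hX)
    rw [isPositive_iff_complex] at hposX
    have hz : ∀ x : H, ⟪(E X) x, x⟫_ℂ = 0 := by
      intro x
      have h1 := (hposX x).1
      have h2 : (⟪x, E X x⟫_ℂ).re = 0 := le_antisymm (hcon x) (hqnn x X hX)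
      have h3 : RCLike.re ⟪(E X) x, x⟫_ℂ = (⟪x, (E X) x⟫_ℂ).re := by
        rw [inner_re_symm]; simp
      rw [← h1, h3, h2]
      simp
    have h0 : ((E X : H →ₗ[ℂ] H)) = 0 := (inner_map_self_eq_zero _).mp hz
    ext x
    simpa using LinearMap.congr_fun h0 x
  obtain ⟨φ, hφpos⟩ := hφex
  -- construct the measure ⟨φ, E(·) φ⟩
  set m : ∀ s : Set Ω, MeasurableSet s → ENNReal :=
    fun s (_ : MeasurableSet s) => ENNReal.ofReal (⟪φ, E s φ⟫_ℂ).re with hm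
  have hm0 : m ∅ MeasurableSet.empty = 0 := by simp [hm, hempty φ]
  have hmU : ∀ (f : ℕ → Set Ω) (h : ∀ i, MeasurableSet (f i)),
      Pairwise (Function.onFun Disjoint f) →
      m (⋃ i, f i) (MeasurableSet.iUnion h) = ∑' i, m (f i) (h i) := by
    intro f hfm hdisj
    have h1 := hadd φ f hfm hdisj
    have h2 : HasSum (fun i => (⟪φ, E (f i) φ⟫_ℂ).re) (⟪φ, E (⋃ i, f i) φ⟫_ℂ).re :=
      h1.mapL Complex.reCLM
    simp only [hm]
    rw [← h2.tsum_eq,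
      ENNReal.ofReal_tsum_of_nonneg (fun i => hqnn φ (f i) (hfm i)) h2.summable]
  set μ : Measure Ω := Measure.ofMeasurable m hm0 hmU with hμ
  have happly : ∀ (s : Set Ω), MeasurableSet s →
      μ s = ENNReal.ofReal (⟪φ, E s φ⟫_ℂ).re :=
    fun s hs => Measure.ofMeasurable_apply s hs
  haveI : IsFiniteMeasure μ :=
    ⟨by rw [happly _ MeasurableSet.univ]; exact ENNReal.ofReal_lt_top⟩
  have hlt : μ Xᶜ < μ Xᶜ + ENNReal.ofReal (⟪φ, E X φ⟫_ℂ).re := by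
    rw [happly _ hX.compl]
    exact ENNReal.lt_add_right ENNReal.ofReal_ne_top
      (ENNReal.ofReal_pos.mpr hφpos).ne'
  obtain ⟨U, hXcU, hUopen, hμU⟩ := Set.exists_isOpen_lt_of_lt Xᶜ _ hlt
  have hEU : E U ≠ 1 := by
    intro h
    have h2 : (⟪φ, E U φ⟫_ℂ).re = (⟪φ, E Xᶜ φ⟫_ℂ).re + (⟪φ, E X φ⟫_ℂ).re := by
      have hc := hcompl φ
      have h3 : (⟪φ, E U φ⟫_ℂ).re = ‖φ‖ ^ 2 := by
        rw [h]
        simpa [ContinuousLinearMap.one_apply] using inner_self_eq_norm_sq (𝕜 := ℂ) φ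
      linarith
    rw [happly _ hUopen.measurableSet, h2,
      ENNReal.ofReal_add (hqnn φ Xᶜ hX.compl) (hqnn φ X hX),
      ← happly _ hX.compl] at hμU
    exact lt_irrefl _ hμU
  obtain ⟨ψ, hψ1, hψ0⟩ := hopen U hUopen hEU
  have hub : ‖E X‖ ≤ 1 :=
    (CStarAlgebra.norm_le_one_iff_of_nonneg _ (hpos X hX)).mpr (hbdd X hX)
  have hlb : ∀ n, 1 - (⟪ψ n, E U (ψ n)⟫_ℂ).re ≤ ‖E X‖ := by
    intro n
    have hc := hcompl (ψ n)
    rw [hψ1 n, one_pow] at hc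
    have hmn := hmono (ψ n) Xᶜ U hX.compl hUopen.measurableSet hXcU
    have hCS : (⟪ψ n, E X (ψ n)⟫_ℂ).re ≤ ‖E X‖ := by
      calc (⟪ψ n, E X (ψ n)⟫_ℂ).re ≤ ‖⟪ψ n, E X (ψ n)⟫_ℂ‖ := by
            simpa using RCLike.re_le_norm (⟪ψ n, E X (ψ n)⟫_ℂ)
        _ ≤ ‖ψ n‖ * ‖E X (ψ n)‖ := norm_inner_le_norm _ _
        _ ≤ ‖ψ n‖ * (‖E X‖ * ‖ψ n‖) := by
            gcongr
            exact le_opNorm _ _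
        _ = ‖E X‖ := by rw [hψ1 n]; ring
    linarith
  have htend : Tendsto (fun n => 1 - (⟪ψ n, E U (ψ n)⟫_ℂ).re) atTop (nhds 1) := by
    simpa using (tendsto_const_nhds (x := (1 : ℝ)) (f := atTop)).sub hψ0
  have hge : (1 : ℝ) ≤ ‖E X‖ := le_of_tendsto htend (Eventually.of_forall hlb)
  linarith
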